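/- arXiv:1309.6184 — 5 statements merged into one kernel-verified Lean document; each statement's English description precedes it below -/
import Mathlib

section
/- Under detailed balance, the quantity U(T_x) := Σ_{(y,y')∈T_x} U(y,y'), summed over the edges of any spanning in-tree T_x oriented toward x, satisfies: for any fixed spanning tree T and any two vertices x, x', the difference U(T_x) - U(T_{x'}) is independent of the choice of tree T; consequently Θ(x) := min_T U(T_x) differs from Θ(x') by a quantity independent of the minimizing trees, and the set M(x) of minimizing trees does not depend on x. -/
open scoped Classical

/-- `t` is a spanning in-tree of the graph `edge` rooted at `x` (parent map). -/
def IsInTreeE {K : Type*} (edge : K → K → Prop) (x : K) (t : K → K) : Prop :=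
  t x = x ∧ (∀ y, y ≠ x → edge y (t y)) ∧ ∀ y, ∃ n : ℕ, t^[n] y = x

/-- The in-trees `t` (rooted at `x`) and `t'` (rooted at `x'`) are two orientations of
the same underlying undirected spanning tree. -/
def SameTree {K : Type*} (x x' : K) (t t' : K → K) : Prop :=
  ∀ y z : K, ((y ≠ x ∧ t y = z) ∨ (z ≠ x ∧ t z = y)) ↔
    ((y ≠ x' ∧ t' y = z) ∨ (z ≠ x' ∧ t' z = y))

/-- `U(T_x) = Σ_{(y,y')∈T_x} U(y,y')` over the oriented edges of the in-tree. -/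
noncomputable def UT {K : Type*} [Fintype K] [DecidableEq K]
    (U : K → K → ℝ) (x : K) (t : K → K) : ℝ :=
  ∑ y ∈ Finset.univ.filter (· ≠ x), U y (t y)

/-- `Θ(x) = min_T U(T_x)`, the minimum over spanning in-trees to `x`. -/
noncomputable def Θ {K : Type*} [Fintype K] [DecidableEq K]
    (edge : K → K → Prop) (U : K → K → ℝ) (x : K) : ℝ :=
  sInf (Set.range fun t : {t : K → K // IsInTreeE edge x t} => UT U x t.1)

namespace Stmt7Helpers


variable {K : Type*}

lemma stab {t : K → K} {x : K} (hx : t x = x) {y : K} {k j : ℕ} (hk : t^[k] y = x)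
    (hkj : k ≤ j) : t^[j] y = x := by
  obtain ⟨m, rfl⟩ := Nat.exists_eq_add_of_le hkj
  rw [add_comm, Function.iterate_add_apply, hk, Function.iterate_fixed hx]

lemma no_cycle {edge : K → K → Prop} {x : K} {t : K → K}
    (ht : IsInTreeE edge x t) {y : K} {q : ℕ} (hq : q ≠ 0) (h : t^[q] y = y) : y = x := by
  obtain ⟨hx, -, hreach⟩ := ht
  obtain ⟨k, hk⟩ := hreach y
  have hper : ∀ m : ℕ, t^[q * m] y = y := by
    intro m
    induction m with
    | zero => simp
    | succ n ih => rw [Nat.mul_succ, Function.iterate_add_apply, h, ih]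
  have hge : k ≤ q * (k + 1) := by nlinarith [Nat.one_le_iff_ne_zero.2 hq]
  calc y = t^[q * (k + 1)] y := (hper _).symm
    _ = x := stab hx hk hge

lemma no_fix {edge : K → K → Prop} {x : K} {t : K → K}
    (ht : IsInTreeE edge x t) {y : K} (h : t y = y) : y = x :=
  no_cycle ht one_ne_zero (by simpa using h)

lemma no_two {edge : K → K → Prop} {x : K} {t : K → K}
    (ht : IsInTreeE edge x t) {y : K} (h : t (t y) = y) : y = x :=
  no_cycle ht two_ne_zero (by
    show t^[2] y = y
    rw [show (2:ℕ) = 1 + 1 from rfl, Function.iterate_add_apply]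
    simpa using h)

lemma sameTree_symm {x x' : K} {t t' : K → K} (hs : SameTree x x' t t') :
    SameTree x' x t' t := fun y z => (hs y z).symm

/-- the per-edge re-orientation map and its properties -/
lemma sigma_facts [DecidableEq K] {edge : K → K → Prop} {x x' : K} {t t' : K → K}
    (ht : IsInTreeE edge x t) (hs : SameTree x x' t t')
    {y : K} (hy : y ≠ x) (f : K → K → ℝ) (hf : ∀ a b, f a b = f b a) :
    (if y ≠ x' ∧ t' y = t y then y else t y) ≠ x'
    ∧ (if (if y ≠ x' ∧ t' y = t y then y else t y) ≠ x
          ∧ t (if y ≠ x' ∧ t' y = t y then y else t y)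
            = t' (if y ≠ x' ∧ t' y = t y then y else t y)
        then (if y ≠ x' ∧ t' y = t y then y else t y)
        else t' (if y ≠ x' ∧ t' y = t y then y else t y)) = y
    ∧ f y (t y) = f (if y ≠ x' ∧ t' y = t y then y else t y)
        (t' (if y ≠ x' ∧ t' y = t y then y else t y)) := by
  have hyz := (hs y (t y)).1 (Or.inl ⟨hy, rfl⟩)
  by_cases h : y ≠ x' ∧ t' y = t y
  · rw [if_pos h]
    refine ⟨h.1, ?_, by rw [h.2]⟩
    rw [if_pos ⟨hy, h.2.symm⟩]
  · rw [if_neg h]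
    have h2 : t y ≠ x' ∧ t' (t y) = y := hyz.resolve_left h
    have hcond : ¬(t y ≠ x ∧ t (t y) = t' (t y)) := by
      rintro ⟨h3, h4⟩
      exact hy (no_two ht (by rw [h4, h2.2]))
    refine ⟨h2.1, by rw [if_neg hcond, h2.2], ?_⟩
    rw [hf, h2.2]

lemma sum_sym_eq [Fintype K] [DecidableEq K] {edge : K → K → Prop}
    {x x' : K} {t t' : K → K}
    (ht : IsInTreeE edge x t) (ht' : IsInTreeE edge x' t') (hs : SameTree x x' t t')
    (f : K → K → ℝ) (hf : ∀ a b, f a b = f b a) :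
    ∑ y ∈ Finset.univ.filter (· ≠ x), f y (t y)
      = ∑ y ∈ Finset.univ.filter (· ≠ x'), f y (t' y) := by
  refine Finset.sum_bij'
    (fun y _ => if y ≠ x' ∧ t' y = t y then y else t y)
    (fun y _ => if y ≠ x ∧ t y = t' y then y else t' y)
    ?_ ?_ ?_ ?_ ?_
  · intro a ha
    simp only [Finset.mem_filter, Finset.mem_univ, true_and] at ha ⊢
    exact (sigma_facts ht hs ha f hf).1
  · intro a ha
    simp only [Finset.mem_filter, Finset.mem_univ, true_and] at ha ⊢
    exact (sigma_facts ht' (sameTree_symm hs) ha f hf).1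
  · intro a ha
    simp only [Finset.mem_filter, Finset.mem_univ, true_and] at ha
    exact (sigma_facts ht hs ha f hf).2.1
  · intro a ha
    simp only [Finset.mem_filter, Finset.mem_univ, true_and] at ha
    exact (sigma_facts ht' (sameTree_symm hs) ha f hf).2.1
  · intro a ha
    simp only [Finset.mem_filter, Finset.mem_univ, true_and] at ha
    exact (sigma_facts ht hs ha f hf).2.2



lemma UT_decomp [Fintype K] [DecidableEq K] {edge : K → K → Prop} {x : K} {t : K → K}
    (ht : IsInTreeE edge x t) (φ : K → K → ℝ) (E : K → ℝ) (Γ : K → ℝ) (U : K → K → ℝ)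
    (hU : ∀ a b, U a b = -Γ a - φ a b)
    (hdb : ∀ a b, edge a b → φ a b - φ b a = E a - E b) :
    UT U x t = Γ x + E x - (∑ z, Γ z) - (∑ z, E z)
      - ∑ y ∈ Finset.univ.filter (· ≠ x), ((φ y (t y) + φ (t y) y) / 2)
      + (1/2) * ∑ y ∈ Finset.univ.filter (· ≠ x), (E y + E (t y)) := by
  have hΓA : ∑ y ∈ Finset.univ.filter (· ≠ x), Γ y = (∑ z, Γ z) - Γ x := by
    rw [Finset.filter_ne', Finset.sum_erase_eq_sub (Finset.mem_univ x)]
  have hEA : ∑ y ∈ Finset.univ.filter (· ≠ x), E y = (∑ z, E z) - E x := by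
    rw [Finset.filter_ne', Finset.sum_erase_eq_sub (Finset.mem_univ x)]
  have hterm : ∀ y ∈ Finset.univ.filter (· ≠ x),
      U y (t y) = -(Γ y) - E y + (-((φ y (t y) + φ (t y) y) / 2) + (1/2) * (E y + E (t y))) := by
    intro y hy
    simp only [Finset.mem_filter, Finset.mem_univ, true_and] at hy
    have hd := hdb y (t y) (ht.2.1 y hy)
    rw [hU]
    linarith
  rw [UT, Finset.sum_congr rfl hterm, Finset.sum_add_distrib, Finset.sum_sub_distrib,
    Finset.sum_add_distrib, Finset.sum_neg_distrib, Finset.sum_neg_distrib,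
    ← Finset.mul_sum, hΓA, hEA]
  ring

lemma UT_sub [Fintype K] [DecidableEq K] {edge : K → K → Prop}
    (hsymm : ∀ a b, edge a b → edge b a) {x x' : K} {t t' : K → K}
    (ht : IsInTreeE edge x t) (ht' : IsInTreeE edge x' t') (hs : SameTree x x' t t')
    (φ : K → K → ℝ) (E : K → ℝ) (Γ : K → ℝ) (U : K → K → ℝ)
    (hU : ∀ a b, U a b = -Γ a - φ a b)
    (hdb : ∀ a b, edge a b → φ a b - φ b a = E a - E b) :
    UT U x t - UT U x' t' = (Γ x - Γ x') + (E x - E x') := by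
  have k1 := sum_sym_eq ht ht' hs (fun a b => (φ a b + φ b a) / 2) (fun a b => by ring)
  have k2 := sum_sym_eq ht ht' hs (fun a b => E a + E b) (fun a b => by ring)
  rw [UT_decomp ht φ E Γ U hU hdb, UT_decomp ht' φ E Γ U hU hdb]
  rw [k1, k2]
  ring


lemma reorient [DecidableEq K] {edge : K → K → Prop}
    (hsymm : ∀ a b, edge a b → edge b a) {x : K} {t : K → K}
    (ht : IsInTreeE edge x t) (x' : K) :
    ∃ t', IsInTreeE edge x' t' ∧ SameTree x x' t t' := by
  obtain ⟨hx, hedge, hreach⟩ := id ht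
  set P : K → Prop := fun y => ∃ n : ℕ, t^[n] x' = y with hPdef
  set t' : K → K := fun y => if h : P y then t^[Nat.find h - 1] x' else t y with ht'def
  have hPx' : P x' := ⟨0, rfl⟩
  have hPx : P x := hreach x'
  have hfind_ne : ∀ {y : K} (h : P y), y ≠ x' → Nat.find h ≠ 0 := by
    intro y h hy h0
    have := Nat.find_spec h
    rw [h0] at this
    exact hy this.symm
  -- value of t' on P-elements
  have ht'P : ∀ {y : K} (h : P y), t' y = t^[Nat.find h - 1] x' := by
    intro y h; simp only [ht'def]; rw [dif_pos h]
  have ht'nP : ∀ {y : K}, ¬P y → t' y = t y := by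
    intro y h; simp only [ht'def]; rw [dif_neg h]
  have ht'x' : t' x' = x' := by
    rw [ht'P hPx']
    have h0 : Nat.find hPx' = 0 := Nat.find_eq_zero hPx' |>.2 rfl
    rw [h0]
    rfl
  -- for y ∈ P, y ≠ x' : t (t' y) = y and t' y ≠ y
  have hback : ∀ {y : K} (h : P y), y ≠ x' → t (t' y) = y := by
    intro y h hy
    obtain ⟨m, hm⟩ := Nat.exists_eq_succ_of_ne_zero (hfind_ne h hy)
    have hspec := Nat.find_spec h
    rw [hm, Function.iterate_succ_apply'] at hspec
    rw [ht'P h, hm]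
    simpa using hspec
  have hne_self : ∀ {y : K} (h : P y), y ≠ x' → t' y ≠ y := by
    intro y h hy heq
    rw [ht'P h] at heq
    exact Nat.find_min h (Nat.pred_lt (hfind_ne h hy)) heq
  have hPt' : ∀ {y : K} (h : P y), P (t' y) := by
    intro y h
    exact ⟨Nat.find h - 1, (ht'P h).symm⟩
  -- t' y ≠ x for y ≠ x (P case)
  have hne_x : ∀ {y : K} (h : P y), y ≠ x' → t' y = x → y = x := by
    intro y h hy hx0
    have := hback h hy
    rw [hx0] at this
    rw [← this, hx]
  -- reachability within P, by strong induction on Nat.find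
  have reachP : ∀ N : ℕ, ∀ y : K, ∀ h : P y, Nat.find h ≤ N → ∃ n, t'^[n] y = x' := by
    intro N
    induction N with
    | zero =>
      intro y h hle
      have h0 : Nat.find h = 0 := Nat.le_zero.1 hle
      have := Nat.find_spec h
      rw [h0] at this
      exact ⟨0, this.symm⟩
    | succ N ih =>
      intro y h hle
      by_cases hy : y = x'
      · exact ⟨0, hy⟩
      · have h2 : P (t' y) := hPt' h
        have hle2 : Nat.find h2 ≤ N := by
          have : Nat.find h2 ≤ Nat.find h - 1 := Nat.find_le (ht'P h).symm
          have hne := hfind_ne h hy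
          omega
        obtain ⟨n, hn⟩ := ih (t' y) h2 hle2
        exact ⟨n + 1, by rw [Function.iterate_succ_apply, hn]⟩
  -- full reachability
  have hreach' : ∀ y : K, ∃ n, t'^[n] y = x' := by
    intro y
    by_cases hy : P y
    · exact reachP _ y hy le_rfl
    · obtain ⟨k, hk⟩ := hreach y
      have hex : ∃ m, P (t^[m] y) := ⟨k, hk ▸ hPx⟩
      set m := Nat.find hex with hm
      have hiter : ∀ i, i ≤ m → t'^[i] y = t^[i] y := by
        intro i hi
        induction i with
        | zero => rfl
        | succ j ihj =>
          have hj1 : j ≤ m := by omega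
          have hnp : ¬P (t^[j] y) := Nat.find_min hex (by omega)
          rw [Function.iterate_succ_apply', Function.iterate_succ_apply',
            ihj hj1, ht'nP hnp]
      obtain ⟨n, hn⟩ := reachP (Nat.find (Nat.find_spec hex)) _ (Nat.find_spec hex) le_rfl
      exact ⟨n + m, by rw [Function.iterate_add_apply, hiter m le_rfl, hn]⟩
  -- edges
  have hedge' : ∀ y, y ≠ x' → edge y (t' y) := by
    intro y hy
    by_cases h : P y
    · have hty := hback h hy
      have hpy : t' y ≠ x := by
        intro h0
        have hyx : y = x := hne_x h hy h0
        exact hne_self h hy (by rw [h0, hyx])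
      have := hedge (t' y) hpy
      rw [hty] at this
      exact hsymm _ _ this
    · rw [ht'nP h]
      exact hedge y (fun hyx => h (hyx ▸ hPx))
  -- the "find" of a child along the tree, for the forward direction
  have hfwd : ∀ y : K, y ≠ x → (y ≠ x' ∧ t' y = t y) ∨ (t y ≠ x' ∧ t' (t y) = y) := by
    intro y hy
    by_cases h : P y
    · right
      set n := Nat.find h with hn
      have hny : t^[n] x' = y := Nat.find_spec h
      have hz : P (t y) := ⟨n + 1, by rw [Function.iterate_succ_apply', hny]⟩
      have hfz : Nat.find hz = n + 1 := by
        refine le_antisymm (Nat.find_le (by rw [Function.iterate_succ_apply', hny])) ?_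
        by_contra hlt
        push_neg at hlt
        set m := Nat.find hz with hmdef
        have hmn : m ≤ n := by omega
        have hmz : t^[m] x' = t y := Nat.find_spec hz
        have hcyc : t^[n + 1 - m] (t y) = t y := by
          calc t^[n + 1 - m] (t y) = t^[n + 1 - m] (t^[m] x') := by rw [hmz]
            _ = t^[n + 1 - m + m] x' := (Function.iterate_add_apply t _ m x').symm
            _ = t^[n + 1] x' := by congr 1; omega
            _ = t y := by rw [Function.iterate_succ_apply', hny]
        have hzx : t y = x := no_cycle ht (by omega) hcyc
        have hstab : t^[n] x' = x := by
          refine stab hx ?_ (by omega : m ≤ n)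
          rw [hmz, hzx]
        exact hy (by rw [← hny, hstab])
      have htz : t y ≠ x' := by
        intro h0
        have : Nat.find hz = 0 := (Nat.find_eq_zero hz).2 h0.symm
        omega
      refine ⟨htz, ?_⟩
      rw [ht'P hz, hfz]
      simpa using hny
    · left
      exact ⟨fun e => h (e ▸ hPx'), ht'nP h⟩
  -- backward direction
  have hbwd : ∀ y : K, y ≠ x' → (y ≠ x ∧ t y = t' y) ∨ (t' y ≠ x ∧ t (t' y) = y) := by
    intro y hy
    by_cases h : P y
    · right
      refine ⟨?_, hback h hy⟩
      intro h0
      have hyx : y = x := hne_x h hy h0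
      exact hne_self h hy (by rw [h0, hyx])
    · left
      exact ⟨fun hyx => h (hyx ▸ hPx), (ht'nP h).symm⟩
  refine ⟨t', ⟨ht'x', hedge', hreach'⟩, ?_⟩
  intro y z
  constructor
  · rintro (⟨hy, rfl⟩ | ⟨hz, rfl⟩)
    · rcases hfwd y hy with ⟨h1, h2⟩ | ⟨h1, h2⟩
      · exact Or.inl ⟨h1, h2⟩
      · exact Or.inr ⟨h1, h2⟩
    · rcases hfwd z hz with ⟨h1, h2⟩ | ⟨h1, h2⟩
      · exact Or.inr ⟨h1, h2⟩
      · exact Or.inl ⟨h1, h2⟩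
  · rintro (⟨hy, rfl⟩ | ⟨hz, rfl⟩)
    · rcases hbwd y hy with ⟨h1, h2⟩ | ⟨h1, h2⟩
      · exact Or.inl ⟨h1, h2⟩
      · exact Or.inr ⟨h1, h2⟩
    · rcases hbwd z hz with ⟨h1, h2⟩ | ⟨h1, h2⟩
      · exact Or.inr ⟨h1, h2⟩
      · exact Or.inl ⟨h1, h2⟩




end Stmt7Helpers

open Stmt7Helpers in
/-- Under detailed balance `φ(x,y) − φ(y,x) = E(x) − E(y)`, the difference
`U(T_x) − U(T_{x'})` between the two orientations of a spanning tree does not depend on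
the tree; hence `Θ(x) − Θ(x')` equals that constant and the set of minimizing
(undirected) trees does not depend on the root. -/
theorem stmt7 {K : Type*} [Fintype K] [DecidableEq K]
    (edge : K → K → Prop) (hsymm : ∀ x y, edge x y → edge y x)
    (φ : K → K → ℝ) (E : K → ℝ) (Γ : K → ℝ) (U : K → K → ℝ)
    (hΓ : ∀ x, Γ x = -(⨆ y, φ x y))
    (hU : ∀ x y, U x y = -Γ x - φ x y)
    (hdb : ∀ x y, edge x y → φ x y - φ y x = E x - E y)
    (hirr : ∀ z : K, ∃ t, IsInTreeE edge z t)
    (x x' : K) :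
    ∃ c : ℝ,
      (∀ t t', IsInTreeE edge x t → IsInTreeE edge x' t' → SameTree x x' t t' →
        UT U x t - UT U x' t' = c) ∧
      Θ edge U x - Θ edge U x' = c ∧
      (∀ t t', IsInTreeE edge x t → IsInTreeE edge x' t' → SameTree x x' t t' →
        (UT U x t = Θ edge U x ↔ UT U x' t' = Θ edge U x')) := by
  classical
  set c := (Γ x - Γ x') + (E x - E x') with hc
  have main : ∀ t t', IsInTreeE edge x t → IsInTreeE edge x' t' → SameTree x x' t t' →
      UT U x t - UT U x' t' = c :=
    fun t t' ht ht' hs => UT_sub hsymm ht ht' hs φ E Γ U hU hdb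
  have hne : (Set.range fun t : {t : K → K // IsInTreeE edge x t} => UT U x t.1).Nonempty := by
    obtain ⟨t, htt⟩ := hirr x
    exact ⟨_, ⟨⟨t, htt⟩, rfl⟩⟩
  have hne' : (Set.range fun t : {t : K → K // IsInTreeE edge x' t} => UT U x' t.1).Nonempty := by
    obtain ⟨t, htt⟩ := hirr x'
    exact ⟨_, ⟨⟨t, htt⟩, rfl⟩⟩
  have hbdd : BddBelow (Set.range fun t : {t : K → K // IsInTreeE edge x t} => UT U x t.1) :=
    (Set.finite_range _).bddBelow
  have hbdd' : BddBelow (Set.range fun t : {t : K → K // IsInTreeE edge x' t} => UT U x' t.1) :=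
    (Set.finite_range _).bddBelow
  have H1 : Θ edge U x - c ≤ Θ edge U x' := by
    apply le_csInf hne'
    rintro b ⟨⟨t', ht'⟩, rfl⟩
    obtain ⟨s, hss, hs⟩ := reorient hsymm ht' x
    have hmain := main s t' hss ht' (sameTree_symm hs)
    have hle : Θ edge U x ≤ UT U x s := csInf_le hbdd ⟨⟨s, hss⟩, rfl⟩
    simp only
    linarith
  have H2 : Θ edge U x' + c ≤ Θ edge U x := by
    apply le_csInf hne
    rintro a ⟨⟨t, htt⟩, rfl⟩
    obtain ⟨s, hss, hs⟩ := reorient hsymm htt x'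
    have hmain := main t s htt hss hs
    have hle : Θ edge U x' ≤ UT U x' s := csInf_le hbdd' ⟨⟨s, hss⟩, rfl⟩
    simp only
    linarith
  have hΘ : Θ edge U x - Θ edge U x' = c := by linarith
  refine ⟨c, main, hΘ, ?_⟩
  intro t t' h1 h2 h3
  have hm := main t t' h1 h2 h3
  constructor <;> intro h <;> linarith
end

section
/- For an irreducible continuous-time Markov chain on a finite state space K, the stationary distribution is given by Kirchhoff's formula: ρ(x) = W(x)/Σ_y W(y), where W(x) = Σ_{T} Π_{(y,z)∈T_x} λ(y,z), the sum running over all spanning trees T of the transition graph and T_x denoting T with edges oriented toward x. That is, this ρ satisfies the stationary Master equation Σ_y [λ(x,y)ρ(x) - λ(y,x)ρ(y)] = 0 for all x. -/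
open scoped Classical

/-- `t : K → K` is a spanning in-tree (parent map) rooted at `x`: the root is a
fixed point and every state reaches `x` by iterating the parent map. -/
def IsInTree {K : Type*} (x : K) (t : K → K) : Prop :=
  t x = x ∧ ∀ y, ∃ n : ℕ, t^[n] y = x

/-- Kirchhoff tree weight: `W(x) = Σ_T Π_{(y,z)∈T_x} λ(y,z)`, the sum over all
spanning in-trees to `x` of the product of the rates along the oriented edges
(trees using non-edges contribute weight 0 since the corresponding rate vanishes). -/
noncomputable def W {K : Type*} [Fintype K] [DecidableEq K] (lam : K → K → ℝ) (x : K) : ℝ :=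
  ∑ t ∈ Finset.univ.filter (IsInTree x),
    ∏ y ∈ Finset.univ.filter (· ≠ x), lam y (t y)

section Aux

variable {K : Type*} [DecidableEq K]

/-- A "good" function at `x`: every state reaches `x` by iteration and the
cycle through `x` is nontrivial. -/
def Good (x : K) (f : K → K) : Prop := f x ≠ x ∧ ∀ z, ∃ n : ℕ, f^[n] z = x

lemma iterate_update_of_ne (f : K → K) (a b z : K) (n : ℕ)
    (h : ∀ k < n, f^[k] z ≠ a) : (Function.update f a b)^[n] z = f^[n] z := by
  induction n with
  | zero => rfl
  | succ n ih =>
    rw [Function.iterate_succ_apply', Function.iterate_succ_apply',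
      ih (fun k hk => h k (Nat.lt_succ_of_lt hk)),
      Function.update_of_ne (h n (Nat.lt_succ_self n))]

lemma reach_update (f : K → K) (a b z : K) (h : ∃ n, f^[n] z = a) :
    ∃ n, (Function.update f a b)^[n] z = a := by
  refine ⟨Nat.find h, ?_⟩
  rw [iterate_update_of_ne f a b z (Nat.find h) (fun k hk => Nat.find_min h hk)]
  exact Nat.find_spec h

lemma Good.exists_ret {x : K} {f : K → K} (h : Good x f) : ∃ m, f^[m + 1] x = x := by
  obtain ⟨n, hn⟩ := h.2 (f x)
  exact ⟨n, by rw [Function.iterate_succ_apply]; exact hn⟩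

/-- The predecessor of `x` on the cycle of a good function. -/
noncomputable def predc (f : K → K) (x : K) : K :=
  if h : ∃ m, f^[m + 1] x = x then f^[Nat.find h] x else x

lemma predc_spec {x : K} {f : K → K} (h : Good x f) : f (predc f x) = x := by
  rw [predc, dif_pos h.exists_ret]
  have hs := Nat.find_spec h.exists_ret
  rwa [Function.iterate_succ_apply'] at hs

lemma predc_ne {x : K} {f : K → K} (h : Good x f) : predc f x ≠ x := by
  intro he
  apply h.1
  conv_lhs => rw [← he]
  exact predc_spec h

lemma reach_predc {x : K} {f : K → K} (h : Good x f) : ∃ n, f^[n] x = predc f x := by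
  rw [predc, dif_pos h.exists_ret]; exact ⟨_, rfl⟩

lemma good_update_tree {x y : K} (hyx : y ≠ x) {t : K → K} (ht : IsInTree x t) :
    Good x (Function.update t x y) := by
  constructor
  · rw [Function.update_self]; exact hyx
  · intro z
    exact reach_update t x y z (ht.2 z)

lemma intree_update_self {x : K} {f : K → K} (h : Good x f) :
    IsInTree x (Function.update f x x) :=
  ⟨Function.update_self x x f, fun z => reach_update f x x z (h.2 z)⟩

lemma good_update {x y : K} (hyx : y ≠ x) {s : K → K} (hs : IsInTree y s) :
    Good x (Function.update s y x) := by
  constructor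
  · rw [Function.update_of_ne (Ne.symm hyx)]
    intro hfx
    obtain ⟨n, hn⟩ := hs.2 x
    have hfix : ∀ k, s^[k] x = x := by
      intro k
      induction k with
      | zero => rfl
      | succ k ih => rw [Function.iterate_succ_apply', ih, hfx]
    rw [hfix n] at hn
    exact hyx hn.symm
  · intro z
    obtain ⟨m, hm⟩ := reach_update s y x z (hs.2 z)
    exact ⟨m + 1, by rw [Function.iterate_succ_apply', hm, Function.update_self]⟩

lemma intree_rhs {x : K} {f : K → K} (h : Good x f) :
    IsInTree (predc f x) (Function.update f (predc f x) (predc f x)) := by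
  refine ⟨Function.update_self _ _ _, fun z => ?_⟩
  apply reach_update
  obtain ⟨n1, hn1⟩ := h.2 z
  obtain ⟨n2, hn2⟩ := reach_predc h
  exact ⟨n2 + n1, by rw [Function.iterate_add_apply, hn1, hn2]⟩

/-- Uniqueness: the cycle predecessor of `x` in `update s y x` is `y`. -/
lemma predc_eq {x y : K} (hyx : y ≠ x) {s : K → K} (hs : IsInTree y s) :
    predc (Function.update s y x) x = y := by
  set f := Function.update s y x with hf
  have hg : Good x f := good_update hyx hs
  have hr := hg.exists_ret
  rw [predc, dif_pos hr]
  set m := Nat.find hr with hmdef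
  have hmspec : f^[m + 1] x = x := Nat.find_spec hr
  -- minimal n with s^[n] x = y
  have hxy := hs.2 x
  set n := Nat.find hxy with hndef
  have hnspec : s^[n] x = y := Nat.find_spec hxy
  have key : ∀ k ≤ n, f^[k] x = s^[k] x := by
    intro k hk
    exact iterate_update_of_ne s y x x k
      (fun j hj => Nat.find_min hxy (lt_of_lt_of_le hj hk))
  have hfn : f^[n] x = y := (key n le_rfl).trans hnspec
  have hfn1 : f^[n + 1] x = x := by
    rw [Function.iterate_succ_apply', hfn, hf, Function.update_self]
  have hm_le : m ≤ n := Nat.find_min' hr hfn1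
  rcases lt_or_eq_of_le hm_le with hmn | hmn
  · exfalso
    have hsm : s^[m + 1] x = x := by
      rw [← key (m + 1) (Nat.succ_le_of_lt hmn)]; exact hmspec
    have hper : ∀ q, s^[(m + 1) * q] x = x := by
      intro q
      induction q with
      | zero => rfl
      | succ q ih =>
        rw [Nat.mul_succ, Function.iterate_add_apply, hsm, ih]
    have hnever : ∀ N, s^[N] x ≠ y := by
      intro N
      have hmod : s^[N] x = s^[N % (m + 1)] x := by
        conv_lhs => rw [← Nat.mod_add_div N (m + 1)]
        rw [Function.iterate_add_apply, hper]
      rw [hmod]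
      exact Nat.find_min hxy
        (lt_of_le_of_lt (Nat.lt_succ_iff.mp (Nat.mod_lt _ (Nat.succ_pos m)))
          hmn)
    exact hnever n hnspec
  · rw [hmn]; exact hfn

end Aux

section Sums

variable {K : Type*} [Fintype K] [DecidableEq K]

lemma lhs_sum (lam : K → K → ℝ) (x : K) :
    ∑ y ∈ Finset.univ.erase x, lam x y * W lam x
      = ∑ f ∈ Finset.univ.filter (Good x), ∏ z, lam z (f z) := by
  have step1 : ∑ y ∈ Finset.univ.erase x, lam x y * W lam x
      = ∑ p ∈ (Finset.univ.erase x) ×ˢ (Finset.univ.filter (IsInTree x)),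
          lam x p.1 * ∏ z ∈ Finset.univ.erase x, lam z (p.2 z) := by
    rw [Finset.sum_product]
    refine Finset.sum_congr rfl fun y _ => ?_
    rw [W, Finset.filter_ne', Finset.mul_sum]
  rw [step1]
  refine Finset.sum_nbij' (fun p => Function.update p.2 x p.1)
    (fun f => (f x, Function.update f x x)) ?_ ?_ ?_ ?_ ?_
  · intro p hp
    rw [Finset.mem_product, Finset.mem_erase, Finset.mem_filter] at hp
    rw [Finset.mem_filter]
    exact ⟨Finset.mem_univ _, good_update_tree hp.1.1 hp.2.2⟩
  · intro f hf
    rw [Finset.mem_filter] at hf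
    rw [Finset.mem_product, Finset.mem_erase, Finset.mem_filter]
    exact ⟨⟨hf.2.1, Finset.mem_univ _⟩, Finset.mem_univ _, intree_update_self hf.2⟩
  · intro p hp
    rw [Finset.mem_product, Finset.mem_filter] at hp
    have h2 : Function.update (Function.update p.2 x p.1) x x = p.2 := by
      rw [Function.update_idem]
      exact Function.update_eq_self_iff.mpr hp.2.2.1.symm
    show (Function.update p.2 x p.1 x, Function.update (Function.update p.2 x p.1) x x) = p
    rw [Function.update_self, h2]
  · intro f hf
    rw [Finset.mem_filter] at hf
    show Function.update (Function.update f x x) x (f x) = f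
    rw [Function.update_idem, Function.update_eq_self]
  · intro p hp
    rw [Finset.mem_product, Finset.mem_erase] at hp
    show lam x p.1 * ∏ z ∈ Finset.univ.erase x, lam z (p.2 z)
      = ∏ z, lam z (Function.update p.2 x p.1 z)
    rw [← Finset.mul_prod_erase Finset.univ
      (fun z => lam z (Function.update p.2 x p.1 z)) (Finset.mem_univ x),
      Function.update_self]
    congr 1
    refine Finset.prod_congr rfl fun z hz => ?_
    rw [Function.update_of_ne (Finset.mem_erase.mp hz).1]

lemma rhs_sum (lam : K → K → ℝ) (x : K) :
    ∑ y ∈ Finset.univ.erase x, lam y x * W lam y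
      = ∑ f ∈ Finset.univ.filter (Good x), ∏ z, lam z (f z) := by
  have step1 : ∑ y ∈ Finset.univ.erase x, lam y x * W lam y
      = ∑ p ∈ (Finset.univ.erase x).sigma
            (fun y => Finset.univ.filter (IsInTree y)),
          lam p.1 x * ∏ z ∈ Finset.univ.erase p.1, lam z (p.2 z) := by
    rw [Finset.sum_sigma]
    refine Finset.sum_congr rfl fun y _ => ?_
    rw [W, Finset.filter_ne', Finset.mul_sum]
  rw [step1]
  refine Finset.sum_nbij' (fun p => Function.update p.2 p.1 x)
    (fun f => ⟨predc f x, Function.update f (predc f x) (predc f x)⟩)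
    ?_ ?_ ?_ ?_ ?_
  · intro p hp
    rw [Finset.mem_sigma, Finset.mem_erase, Finset.mem_filter] at hp
    rw [Finset.mem_filter]
    exact ⟨Finset.mem_univ _, good_update hp.1.1 hp.2.2⟩
  · intro f hf
    rw [Finset.mem_filter] at hf
    rw [Finset.mem_sigma, Finset.mem_erase, Finset.mem_filter]
    exact ⟨⟨predc_ne hf.2, Finset.mem_univ _⟩, Finset.mem_univ _, intree_rhs hf.2⟩
  · rintro ⟨y, s⟩ hp
    rw [Finset.mem_sigma, Finset.mem_erase, Finset.mem_filter] at hp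
    have h1 : predc (Function.update s y x) x = y := predc_eq hp.1.1 hp.2.2
    show (⟨predc (Function.update s y x) x,
      Function.update (Function.update s y x) (predc (Function.update s y x) x)
        (predc (Function.update s y x) x)⟩ : (_ : K) × (K → K)) = ⟨y, s⟩
    rw [h1, Function.update_idem]
    have h2 : Function.update s y y = s :=
      Function.update_eq_self_iff.mpr hp.2.2.1.symm
    rw [h2]
  · intro f hf
    rw [Finset.mem_filter] at hf
    show Function.update (Function.update f (predc f x) (predc f x))
      (predc f x) x = f
    rw [Function.update_idem]
    exact Function.update_eq_self_iff.mpr (predc_spec hf.2).symm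
  · rintro ⟨y, s⟩ hp
    rw [Finset.mem_sigma, Finset.mem_erase] at hp
    show lam y x * ∏ z ∈ Finset.univ.erase y, lam z (s z)
      = ∏ z, lam z (Function.update s y x z)
    rw [← Finset.mul_prod_erase Finset.univ
      (fun z => lam z (Function.update s y x z)) (Finset.mem_univ y),
      Function.update_self]
    congr 1
    refine Finset.prod_congr rfl fun z hz => ?_
    rw [Function.update_of_ne (Finset.mem_erase.mp hz).1]

end Sums

/-- Kirchhoff's formula: for an irreducible continuous-time Markov chain on a finite
state space, `ρ(x) = W(x)/Σ_y W(y)` satisfies the stationary Master equation. -/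
theorem stmt8 {K : Type*} [Fintype K] [DecidableEq K]
    (lam : K → K → ℝ) (hnn : ∀ x y, 0 ≤ lam x y)
    (hirr : ∀ x y : K, x ≠ y → Relation.TransGen (fun u v => 0 < lam u v) x y) :
    ∀ x : K,
      ∑ y : K, (lam x y * (W lam x / ∑ z : K, W lam z)
        - lam y x * (W lam y / ∑ z : K, W lam z)) = 0 := by
  intro x
  have key : ∑ y : K, lam x y * W lam x = ∑ y : K, lam y x * W lam y := by
    rw [← Finset.add_sum_erase _ (fun y => lam x y * W lam x) (Finset.mem_univ x),
      ← Finset.add_sum_erase _ (fun y => lam y x * W lam y) (Finset.mem_univ x),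
      lhs_sum, rhs_sum]
  have expand : ∀ y : K,
      lam x y * (W lam x / ∑ z : K, W lam z)
        - lam y x * (W lam y / ∑ z : K, W lam z)
      = (lam x y * W lam x - lam y x * W lam y) / ∑ z : K, W lam z := by
    intro y
    rw [← mul_div_assoc, ← mul_div_assoc, ← sub_div]
  calc ∑ y : K, (lam x y * (W lam x / ∑ z : K, W lam z)
        - lam y x * (W lam y / ∑ z : K, W lam z))
      = ∑ y : K, (lam x y * W lam x - lam y x * W lam y) / ∑ z : K, W lam z := by
        exact Finset.sum_congr rfl fun y _ => expand y
    _ = (∑ y : K, (lam x y * W lam x - lam y x * W lam y)) / ∑ z : K, W lam z := by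
        rw [Finset.sum_div]
    _ = 0 := by rw [Finset.sum_sub_distrib, key, sub_self, zero_div]
end

section
/- Theorem 1 (low-temperature stationary occupation): Assume rates λ(x,y;β) = a(x,y) e^{-β(Γ(x)+U(x,y))} on a finite irreducible graph, with a(x,y) > 0 constants, U(x,y) ≥ 0, and for each x at least one y with U(x,y) = 0. Then there exists ε > 0 such that the stationary distribution satisfies ρ(x;β) = (1/Z_β) A(x) e^{β(Γ(x)-Θ(x))} (1 + O(e^{-βε})) as β → ∞, where Θ(x) = min_T U(T_x), A(x) = Σ_{T∈M(x)} Π_{(y,y')∈T_x} a(y,y'), and Z_β = Σ_y A(y) e^{β(Γ(y)-Θ(y))}. -/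
open scoped Classical

/-- Spanning in-trees to `x` using only edges of the graph (pairs with positive
reactivity `a`). -/
noncomputable def treesA {K : Type*} [Fintype K] [DecidableEq K]
    (a : K → K → ℝ) (x : K) : Finset (K → K) :=
  Finset.univ.filter (fun t => IsInTree x t ∧ ∀ y, y ≠ x → 0 < a y (t y))

/-- Kirchhoff weight of `x` for the rates `λ_β(y,z) = a(y,z) e^{-β(Γ(y)+U(y,z))}`. -/
noncomputable def Wβ {K : Type*} [Fintype K] [DecidableEq K]
    (a : K → K → ℝ) (Γ : K → ℝ) (U : K → K → ℝ) (β : ℝ) (x : K) : ℝ :=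
  ∑ t ∈ treesA a x, ∏ y ∈ Finset.univ.filter (· ≠ x),
    a y (t y) * Real.exp (-β * (Γ y + U y (t y)))

/-- The stationary distribution from Kirchhoff's formula. -/
noncomputable def ρ {K : Type*} [Fintype K] [DecidableEq K]
    (a : K → K → ℝ) (Γ : K → ℝ) (U : K → K → ℝ) (β : ℝ) (x : K) : ℝ :=
  Wβ a Γ U β x / ∑ z : K, Wβ a Γ U β z

/-- Theorem 1: low-temperature asymptotics of the stationary occupations
`ρ(x;β) = (1/Z_β) A(x) e^{β(Γ(x)-Θ(x))}(1 + O(e^{-βε}))`. -/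
theorem stmt10 {K : Type*} [Fintype K] [DecidableEq K]
    (a : K → K → ℝ) (Γ : K → ℝ) (U : K → K → ℝ)
    (ha : ∀ y z, 0 ≤ a y z) (hU : ∀ y z, 0 ≤ U y z)
    (hU0 : ∀ x, ∃ y, 0 < a x y ∧ U x y = 0)
    (hne : ∀ x : K, (treesA a x).Nonempty)
    (Θ : K → ℝ) (hΘ : ∀ x, Θ x = (treesA a x).inf' (hne x) (UT U x))
    (M : K → Finset (K → K)) (hM : ∀ x, M x = (treesA a x).filter (fun t => UT U x t = Θ x))
    (A : K → ℝ) (hA : ∀ x, A x = ∑ t ∈ M x, ∏ y ∈ Finset.univ.filter (· ≠ x), a y (t y))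
    (ε : ℝ) (hεpos : 0 < ε)
    (hεmin : ∀ x, ∀ t ∈ treesA a x, t ∉ M x → ε ≤ UT U x t - Θ x) :
    ∃ C > (0 : ℝ), ∃ β₀ : ℝ, ∀ β ≥ β₀, ∀ x : K,
      |ρ a Γ U β x
          - A x * Real.exp (β * (Γ x - Θ x)) / (∑ y : K, A y * Real.exp (β * (Γ y - Θ y)))|
        ≤ C * Real.exp (-β * ε)
            * (A x * Real.exp (β * (Γ x - Θ x)) / (∑ y : K, A y * Real.exp (β * (Γ y - Θ y)))) := by

  classical
  obtain hK | hK := isEmpty_or_nonempty K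
  · exact ⟨1, one_pos, 0, fun β _ x => (IsEmpty.false x).elim⟩
  set P : K → (K → K) → ℝ := fun x t => ∏ y ∈ Finset.univ.filter (· ≠ x), a y (t y) with hP
  have hPpos : ∀ x, ∀ t ∈ treesA a x, 0 < P x t := by
    intro x t ht
    refine Finset.prod_pos ?_
    intro y hy
    rw [Finset.mem_filter] at hy
    have ht' := (Finset.mem_filter.mp ht).2.2
    exact ht' y hy.2
  have hPnonneg : ∀ x t, 0 ≤ P x t := fun x t => Finset.prod_nonneg fun y _ => ha _ _
  have hMsub : ∀ x, M x ⊆ treesA a x := by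
    intro x; rw [hM]; exact Finset.filter_subset _ _
  have hMne : ∀ x, (M x).Nonempty := by
    intro x
    obtain ⟨t, ht, hteq⟩ := Finset.exists_mem_eq_inf' (hne x) (UT U x)
    exact ⟨t, by rw [hM]; exact Finset.mem_filter.mpr ⟨ht, by rw [hΘ, ← hteq]⟩⟩
  have hApos : ∀ x, 0 < A x := by
    intro x
    rw [hA]
    exact Finset.sum_pos (fun t ht => hPpos x t (hMsub x ht)) (hMne x)
  set S : ℝ := ∑ z : K, Γ z with hS
  set r : ℝ → K → ℝ := fun β x =>
    ∑ t ∈ treesA a x \ M x, P x t * Real.exp (-β * (UT U x t - Θ x)) with hr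
  -- per-term rewrite of the Kirchhoff product
  have hterm : ∀ β x t,
      (∏ y ∈ Finset.univ.filter (· ≠ x), a y (t y) * Real.exp (-β * (Γ y + U y (t y))))
        = Real.exp (-β * S) * (Real.exp (β * (Γ x - Θ x))
            * (P x t * Real.exp (-β * (UT U x t - Θ x)))) := by
    intro β x t
    rw [Finset.prod_mul_distrib, ← Real.exp_sum]
    have h2 : ∑ y ∈ Finset.univ.filter (· ≠ x), Γ y = S - Γ x := by
      have h3 := Finset.add_sum_erase Finset.univ Γ (Finset.mem_univ x)
      rw [Finset.filter_ne']
      rw [hS]; linarith [h3]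
    have h1 : ∑ y ∈ Finset.univ.filter (· ≠ x), (-β * (Γ y + U y (t y)))
        = -β * ((S - Γ x) + UT U x t) := by
      rw [← Finset.mul_sum, Finset.sum_add_distrib, h2, UT]
    rw [h1, hP]
    rw [show Real.exp (-β * S) * (Real.exp (β * (Γ x - Θ x))
          * ((∏ y ∈ Finset.univ.filter (· ≠ x), a y (t y))
              * Real.exp (-β * (UT U x t - Θ x))))
        = (∏ y ∈ Finset.univ.filter (· ≠ x), a y (t y))
            * (Real.exp (-β * S) * Real.exp (β * (Γ x - Θ x))
                * Real.exp (-β * (UT U x t - Θ x))) from by ring]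
    rw [← Real.exp_add, ← Real.exp_add]
    congr 2
    ring
  have hsplit : ∀ β x,
      (∑ t ∈ treesA a x, P x t * Real.exp (-β * (UT U x t - Θ x))) = A x + r β x := by
    intro β x
    rw [← Finset.sum_sdiff (hMsub x)]
    have hMsum : ∑ t ∈ M x, P x t * Real.exp (-β * (UT U x t - Θ x)) = A x := by
      rw [hA]
      refine Finset.sum_congr rfl fun t ht => ?_
      have htΘ : UT U x t = Θ x := by
        have := Finset.mem_filter.mp ((hM x) ▸ ht)
        exact this.2
      rw [htΘ, sub_self, mul_zero, Real.exp_zero, mul_one, hP]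
    rw [hMsum, hr]
    ring
  have hW : ∀ β x, Wβ a Γ U β x
      = Real.exp (-β * S) * (Real.exp (β * (Γ x - Θ x)) * (A x + r β x)) := by
    intro β x
    rw [Wβ]
    rw [Finset.sum_congr rfl fun t _ => hterm β x t]
    rw [← Finset.mul_sum, ← Finset.mul_sum, hsplit]
  refine ⟨2 * (∑ x : K, (∑ t ∈ treesA a x \ M x, P x t) / A x) + 1, ?_, 0, ?_⟩
  · have : 0 ≤ ∑ x : K, (∑ t ∈ treesA a x \ M x, P x t) / A x :=
      Finset.sum_nonneg fun x _ =>
        div_nonneg (Finset.sum_nonneg fun t _ => hPnonneg x t) (hApos x).le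
    linarith
  intro β hβ x
  set κ : ℝ := ∑ x : K, (∑ t ∈ treesA a x \ M x, P x t) / A x with hκ
  have hκ0 : 0 ≤ κ :=
    Finset.sum_nonneg fun x _ =>
      div_nonneg (Finset.sum_nonneg fun t _ => hPnonneg x t) (hApos x).le
  set e : ℝ := Real.exp (-β * ε) with he
  have he0 : 0 < e := Real.exp_pos _
  set g : K → ℝ := fun z => Real.exp (β * (Γ z - Θ z)) with hg
  have hg0 : ∀ z, 0 < g z := fun z => Real.exp_pos _
  set D : ℝ := ∑ y : K, A y * g y with hD
  have hD0 : 0 < D :=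
    Finset.sum_pos (fun y _ => mul_pos (hApos y) (hg0 y)) Finset.univ_nonempty
  set Rt : ℝ := ∑ z : K, g z * r β z with hRt
  set E : ℝ := ∑ z : K, g z * (A z + r β z) with hE
  have hEeq : E = D + Rt := by
    rw [hE, hD, hRt, ← Finset.sum_add_distrib]
    exact Finset.sum_congr rfl fun z _ => by ring
  -- bounds on r
  have hr0 : ∀ z, 0 ≤ r β z := fun z =>
    Finset.sum_nonneg fun t _ => mul_nonneg (hPnonneg z t) (Real.exp_pos _).le
  have hrle : ∀ z, r β z ≤ κ * A z * e := by
    intro z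
    have h1 : r β z ≤ (∑ t ∈ treesA a z \ M z, P z t) * e := by
      rw [Finset.sum_mul]
      refine Finset.sum_le_sum fun t ht => ?_
      have htm := Finset.mem_sdiff.mp ht
      have hεt := hεmin z t htm.1 htm.2
      refine mul_le_mul_of_nonneg_left ?_ (hPnonneg z t)
      rw [he, Real.exp_le_exp, neg_mul, neg_mul, neg_le_neg_iff]
      exact mul_le_mul_of_nonneg_left hεt hβ
    have h2 : (∑ t ∈ treesA a z \ M z, P z t) ≤ κ * A z := by
      have h3 : (∑ t ∈ treesA a z \ M z, P z t) / A z ≤ κ := by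
        rw [hκ]
        exact Finset.single_le_sum (f := fun x => (∑ t ∈ treesA a x \ M x, P x t) / A x)
          (fun x _ => div_nonneg (Finset.sum_nonneg fun t _ => hPnonneg x t) (hApos x).le)
          (Finset.mem_univ z)
      calc (∑ t ∈ treesA a z \ M z, P z t)
          = ((∑ t ∈ treesA a z \ M z, P z t) / A z) * A z :=
            (div_mul_cancel₀ _ (ne_of_gt (hApos z))).symm
        _ ≤ κ * A z := mul_le_mul_of_nonneg_right h3 (hApos z).le
    calc r β z ≤ (∑ t ∈ treesA a z \ M z, P z t) * e := h1
      _ ≤ κ * A z * e := mul_le_mul_of_nonneg_right h2 he0.le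
  have hRt0 : 0 ≤ Rt :=
    Finset.sum_nonneg fun z _ => mul_nonneg (hg0 z).le (hr0 z)
  have hRtle : Rt ≤ κ * e * D := by
    calc Rt ≤ ∑ z : K, g z * (κ * A z * e) :=
          Finset.sum_le_sum fun z _ => mul_le_mul_of_nonneg_left (hrle z) (hg0 z).le
      _ = κ * e * D := by
          rw [hD, Finset.mul_sum]
          exact Finset.sum_congr rfl fun z _ => by ring
  have hE0 : 0 < E := by rw [hEeq]; linarith
  have hDE : D ≤ E := by rw [hEeq]; linarith
  -- rewrite ρ
  have hρ : ρ a Γ U β x = g x * (A x + r β x) / E := by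
    rw [ρ, hW β x]
    have hsum : (∑ z : K, Wβ a Γ U β z) = Real.exp (-β * S) * E := by
      rw [hE, Finset.mul_sum]
      exact Finset.sum_congr rfl fun z _ => by rw [hW β z]
    rw [hsum]
    rw [show Real.exp (-β * S) * (Real.exp (β * (Γ x - Θ x)) * (A x + r β x))
        = Real.exp (-β * S) * (g x * (A x + r β x)) from by rw [hg]]
    exact mul_div_mul_left _ _ (Real.exp_ne_zero _)
  rw [hρ]
  have hdiff : g x * (A x + r β x) / E - A x * g x / D
      = (g x * (A x + r β x) * D - E * (A x * g x)) / (E * D) :=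
    div_sub_div _ _ (ne_of_gt hE0) (ne_of_gt hD0)
  rw [hdiff, abs_div, abs_of_pos (mul_pos hE0 hD0), div_le_iff₀ (mul_pos hE0 hD0)]
  have hnum2 : g x * (A x + r β x) * D - E * (A x * g x)
      = g x * (r β x * D - A x * Rt) := by rw [hEeq]; ring
  rw [hnum2, abs_mul, abs_of_pos (hg0 x)]
  have h1 : r β x * D ≤ κ * A x * e * D :=
    mul_le_mul_of_nonneg_right (hrle x) hD0.le
  have h2 : A x * Rt ≤ A x * (κ * e * D) :=
    mul_le_mul_of_nonneg_left hRtle (hApos x).le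
  have h3 : 0 ≤ r β x * D := mul_nonneg (hr0 x) hD0.le
  have h4 : 0 ≤ A x * Rt := mul_nonneg (hApos x).le hRt0
  have h5 : 0 ≤ κ * A x * e * D :=
    mul_nonneg (mul_nonneg (mul_nonneg hκ0 (hApos x).le) he0.le) hD0.le
  have habs : |r β x * D - A x * Rt| ≤ 2 * (κ * e) * (A x * D) := by
    rw [abs_le]
    constructor
    · linarith
    · linarith
  calc g x * |r β x * D - A x * Rt|
      ≤ g x * (2 * (κ * e) * (A x * D)) :=
        mul_le_mul_of_nonneg_left habs (hg0 x).le
    _ ≤ (2 * κ + 1) * e * (A x * g x / D) * (E * D) := by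
        have p1 : 0 ≤ κ * e * (A x * g x) * (E - D) :=
          mul_nonneg (mul_nonneg (mul_nonneg hκ0 he0.le)
            (mul_nonneg (hApos x).le (hg0 x).le)) (by linarith)
        have p2 : 0 ≤ e * (A x * g x) * E :=
          mul_nonneg (mul_nonneg he0.le (mul_nonneg (hApos x).le (hg0 x).le)) hE0.le
        have hgoal : (2 * κ + 1) * e * (A x * g x / D) * (E * D)
            = (2 * κ + 1) * e * (A x * g x) * E := by
          field_simp
        rw [hgoal]
        linarith [p1, p2]
end

section
/- Consider the random walk on the ring Z/NZ (N > 2) with rates λ(x,x+1) = a_x e^{βq/2} and λ(x+1,x) = a_x e^{-βq/2}, q > 0, a_x > 0 independent of β. Then the stationary distribution satisfies ρ(x)/ρ(y) → a_y/a_x as β → ∞, with error O(e^{-βε}) for some ε > 0. -/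
/-!
Stationarity at `w` says that the net current `J z = λ(z,z+1) ρ(z) - λ(z+1,z) ρ(z+1)` across
the edge `{z, z+1}` equals the current across `{w-1, w}`, so `J` is constant around the ring.
Solving `J = a_z (e^{βq/2} ρ(z) - e^{-βq/2} ρ(z+1))` for `ρ(z)` and normalising gives
`ρ(z) = (1 - E) / (S a_z) + E ρ(z+1)` with `E = e^{-βq}` and `S = ∑ 1/a_w`. Hence
`ρ(x) - (a_y/a_x) ρ(y) = E (ρ(x+1) - (a_y/a_x) ρ(y+1)) = O(E)`, while
`ρ(y) ≥ (1 - E) / (S a_y)` stays bounded away from `0`.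
-/

open Finset Real

open Fin.NatCast in
theorem Fin.apply_eq_apply_zero_of_apply_add_one {n : ℕ} [NeZero n] {α : Type*}
    {f : Fin n → α} (hf : ∀ z, f (z + 1) = f z) (z : Fin n) : f z = f 0 := by
  rw [← Fin.cast_val_eq_self z]
  induction (z : ℕ) with
  | zero => simp
  | succ k ih => rw [Nat.cast_add_one, hf, ih]

namespace DrivenRingWalk

def IsStationary {ι : Type*} [Fintype ι] (rate : ι → ι → ℝ) (ρ : ι → ℝ) : Prop :=
  ∀ x, ∑ y, (rate x y * ρ x - rate y x * ρ y) = 0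

theorem mul_sum_inv_eq_one_sub {ι : Type*} [Fintype ι] (σ : Equiv.Perm ι) {ρ a : ι → ℝ}
    {κ E : ℝ} (hρ : ∀ z, ρ z = κ / a z + E * ρ (σ z)) (hsum : ∑ z, ρ z = 1) :
    κ * ∑ z, (a z)⁻¹ = 1 - E := by
  have h : (1 : ℝ) = κ * ∑ z, (a z)⁻¹ + E :=
    calc (1 : ℝ) = ∑ z, (κ / a z + E * ρ (σ z)) :=
          hsum.symm.trans (sum_congr rfl fun z _ => hρ z)
      _ = κ * ∑ z, (a z)⁻¹ + E := by
        simp only [sum_add_distrib, ← mul_sum, div_eq_mul_inv, Equiv.sum_comp σ ρ, hsum,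
          mul_one]
  linarith

theorem abs_div_sub_div_le_of_eq_div_add {ρx ρy u v ax ay κ E : ℝ}
    (hax : 0 < ax) (hay : 0 < ay) (hκ : 0 < κ) (hE : 0 ≤ E) (hu : u ∈ Set.Icc (0 : ℝ) 1) (hv : v ∈ Set.Icc (0 : ℝ) 1)
    (hx : ρx = κ / ax + E * u) (hy : ρy = κ / ay + E * v) :
    |ρx / ρy - ay / ax| ≤ E * (1 + ay / ax) * ay / κ := by
  set k := ay / ax
  have hk : 0 < k := div_pos hay hax
  have hρy : κ / ay ≤ ρy := by rw [hy]; nlinarith [hv.1]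
  have hρy_pos : 0 < ρy := (div_pos hκ hay).trans_le hρy
  have hnum : ρx - k * ρy = E * (u - k * v) := by
    rw [hx, hy]; simp only [k]; field_simp; ring
  have huv : |u - k * v| ≤ 1 + k := by
    rw [abs_le]; constructor <;> nlinarith [hu.1, hu.2, hv.1, hv.2]
  calc |ρx / ρy - k| = E * |u - k * v| / ρy := by
        rw [show ρx / ρy - k = (ρx - k * ρy) / ρy by field_simp, hnum, abs_div, abs_mul,
          abs_of_nonneg hE, abs_of_pos hρy_pos]
    _ ≤ E * (1 + k) / (κ / ay) := by gcongr
    _ = E * (1 + k) * ay / κ := by field_simp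

variable {m : ℕ}

def ringRate (r l : Fin (m + 3) → ℝ) (x y : Fin (m + 3)) : ℝ :=
  if y = x + 1 then r x else if x = y + 1 then l y else 0

def ringCurrent (r l ρ : Fin (m + 3) → ℝ) (z : Fin (m + 3)) : ℝ :=
  r z * ρ z - l z * ρ (z + 1)

theorem add_one_add_one_ne_self (w : Fin (m + 3)) : w + 1 + 1 ≠ w := by
  intro h
  have h2 : (2 : Fin (m + 3)) = 0 := by
    open Fin.CommRing in linear_combination h
  simp [Fin.ext_iff, Nat.mod_eq_of_lt (show 2 < m + 3 by omega)] at h2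

theorem ringRate_flux (r l ρ : Fin (m + 3) → ℝ) (w y : Fin (m + 3)) :
    ringRate r l w y * ρ w - ringRate r l y w * ρ y =
      (if y = w + 1 then ringCurrent r l ρ w else 0) -
        (if w = y + 1 then ringCurrent r l ρ y else 0) := by
  unfold ringRate ringCurrent
  split_ifs with hy hw hw
  · exact absurd (hy ▸ hw).symm (add_one_add_one_ne_self w)
  · subst hy; ring
  · subst hw; ring
  · ring

theorem sum_ringRate_flux (r l ρ : Fin (m + 3) → ℝ) (w : Fin (m + 3)) :
    ∑ y, (ringRate r l w y * ρ w - ringRate r l y w * ρ y) =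
      ringCurrent r l ρ w - ringCurrent r l ρ (w - 1) := by
  simp_rw [ringRate_flux, sum_sub_distrib, eq_comm (a := w), ← eq_sub_iff_add_eq, sum_ite_eq',
    mem_univ, if_true]

theorem ringCurrent_eq_of_isStationary {r l ρ : Fin (m + 3) → ℝ}
    (h : IsStationary (ringRate r l) ρ) (z : Fin (m + 3)) :
    ringCurrent r l ρ z = ringCurrent r l ρ 0 := by
  refine Fin.apply_eq_apply_zero_of_apply_add_one (fun w => ?_) z
  have hw := h (w + 1)
  rw [sum_ringRate_flux, add_sub_cancel_right] at hw
  linarith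

theorem eq_div_add_mul_of_isStationary {a ρ : Fin (m + 3) → ℝ} {c c' : ℝ}
    (ha : ∀ z, 0 < a z) (hc : 0 < c) (hsum : ∑ z, ρ z = 1)
    (h : IsStationary (ringRate (fun z => a z * c) (fun z => a z * c')) ρ) (z : Fin (m + 3)) :
    ρ z = (1 - c' / c) / (∑ w, (a w)⁻¹) / a z + c' / c * ρ (z + 1) := by
  set κ := ringCurrent (fun z => a z * c) (fun z => a z * c') ρ 0 / c
  have hrec : ∀ z, ρ z = κ / a z + c' / c * ρ (z + 1) := by
    intro z
    have hz := ringCurrent_eq_of_isStationary h z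
    simp only [κ, ringCurrent] at hz ⊢
    have := (ha z).ne'
    field_simp
    linarith
  have hS : (∑ w, (a w)⁻¹) ≠ 0 := (sum_pos (fun w _ => inv_pos.2 (ha w)) univ_nonempty).ne'
  rw [hrec z, ← mul_sum_inv_eq_one_sub (Equiv.addRight 1) hrec hsum, mul_div_cancel_right₀ _ hS]

end DrivenRingWalk

open DrivenRingWalk

/-- Driven ring walk on `Z/NZ` (`N = m+3 > 2`) with rates
`λ(x,x+1) = a_x e^{βq/2}`, `λ(x+1,x) = a_x e^{-βq/2}`: its stationary distribution
satisfies `ρ(x)/ρ(y) = a_y/a_x + O(e^{-βε})` as `β → ∞`. -/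
theorem stmt11 (m : ℕ) (q : ℝ) (hq : 0 < q)
    (a : Fin (m + 3) → ℝ) (ha : ∀ x, 0 < a x)
    (lam : ℝ → Fin (m + 3) → Fin (m + 3) → ℝ)
    (hlam : ∀ (β : ℝ) (x y : Fin (m + 3)),
      lam β x y = if y = x + 1 then a x * Real.exp (β * q / 2)
        else if x = y + 1 then a y * Real.exp (-(β * q) / 2) else 0)
    (ρ : ℝ → Fin (m + 3) → ℝ)
    (hρpos : ∀ β x, 0 < ρ β x)
    (hρsum : ∀ β, ∑ x, ρ β x = 1)
    (hstat : ∀ (β : ℝ) (x : Fin (m + 3)),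
      ∑ y, (lam β x y * ρ β x - lam β y x * ρ β y) = 0) :
    ∀ x y : Fin (m + 3), ∃ ε > (0 : ℝ), ∃ C > (0 : ℝ), ∃ β₀ : ℝ, ∀ β ≥ β₀,
      |ρ β x / ρ β y - a y / a x| ≤ C * Real.exp (-β * ε) := by
  intro x y
  set S := ∑ z, (a z)⁻¹
  have hS : 0 < S := sum_pos (fun z _ => inv_pos.2 (ha z)) univ_nonempty
  have hδ : 0 < 1 - exp (-q) := sub_pos.2 (exp_lt_one_iff.2 (neg_neg_of_pos hq))
  have hk : 0 < 1 + a y / a x := by linarith [div_pos (ha y) (ha x)]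
  refine ⟨q, hq, (1 + a y / a x) * a y * S / (1 - exp (-q)),
    div_pos (mul_pos (mul_pos hk (ha y)) hS) hδ, 1, fun β hβ => ?_⟩
  have hlamβ : lam β =
      ringRate (fun z => a z * exp (β * q / 2)) (fun z => a z * exp (-(β * q) / 2)) :=
    funext₂ (hlam β)
  have hE : exp (-(β * q) / 2) / exp (β * q / 2) = exp (-β * q) := by
    rw [← exp_sub]; ring_nf
  have hrec := eq_div_add_mul_of_isStationary ha (exp_pos _) (hρsum β) (hlamβ ▸ hstat β)
  simp only [hE] at hrec
  have hEq : exp (-β * q) ≤ exp (-q) := exp_le_exp.2 (by nlinarith)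
  have hκ : (1 - exp (-q)) / S ≤ (1 - exp (-β * q)) / S := by gcongr
  have hρ01 : ∀ z, ρ β z ∈ Set.Icc (0 : ℝ) 1 := fun z =>
    ⟨(hρpos β z).le, hρsum β ▸ single_le_sum (fun w _ => (hρpos β w).le) (mem_univ z)⟩
  calc |ρ β x / ρ β y - a y / a x|
      ≤ exp (-β * q) * (1 + a y / a x) * a y / ((1 - exp (-β * q)) / S) :=
        abs_div_sub_div_le_of_eq_div_add (ha x) (ha y) ((div_pos hδ hS).trans_le hκ)
          (exp_pos _).le (hρ01 _) (hρ01 _) (hrec x) (hrec y)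
    _ ≤ exp (-β * q) * (1 + a y / a x) * a y / ((1 - exp (-q)) / S) := by
        gcongr; exact (mul_pos (mul_pos (exp_pos _) hk) (ha y)).le
    _ = (1 + a y / a x) * a y * S / (1 - exp (-q)) * exp (-β * q) := by field_simp
end

section
/- Let a finite irreducible Markov jump process have rates λ(x,y) = a(x,y) e^{-β(Γ(x)+U(x,y))}. If Θ(x) = min_T U(T_x) = 0 for all x (strongly connected digraph of preferred transitions) then the states maximizing lim_{β→∞} (1/β) log ρ(x) are exactly the states maximizing Γ(x), i.e., the states with the longest log-asymptotic lifetime. -/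
open scoped Classical
open Filter

/-!
By Kirchhoff's formula the weight of `x` is a sum over in-trees `T` to `x` of positive
constants times `exp (β (Γ x - ∑ Γ - U(T_x)))`. A finite sum of positive functions grows
exponentially at the largest of the rates of its terms, so the weight of `x` has rate
`Γ x - ∑ Γ - Θ x = Γ x - ∑ Γ`, and the normalising sum has rate `max Γ - ∑ Γ`.
-/

open Finset Real Topology

theorem tendsto_log_sum_div_atTop {ι : Type*} {s : Finset ι} (hs : s.Nonempty)
    {f : ι → ℝ → ℝ} {L : ι → ℝ} (hpos : ∀ i ∈ s, ∀ β, 0 < f i β)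
    (hf : ∀ i ∈ s, Tendsto (fun β => log (f i β) / β) atTop (𝓝 (L i))) :
    Tendsto (fun β => log (∑ i ∈ s, f i β) / β) atTop (𝓝 (s.sup' hs L)) := by
  set m : ℝ → ℝ := fun β => s.sup' hs fun i => log (f i β) / β
  have hm : Tendsto m atTop (𝓝 (s.sup' hs L)) := Tendsto.finset_sup'_nhds_apply hs hf
  have hsum_pos : ∀ β, 0 < ∑ i ∈ s, f i β := fun β => sum_pos (fun i hi => hpos i hi β) hs
  have hcard : Tendsto (fun β : ℝ => log #s / β + m β) atTop (𝓝 (s.sup' hs L)) := by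
    simpa using (tendsto_id.const_div_atTop (log #s)).add hm
  refine tendsto_of_tendsto_of_tendsto_of_le_of_le' hm hcard ?_ ?_
  all_goals filter_upwards [eventually_gt_atTop 0] with β hβ
  · refine sup'_le _ _ fun i hi => div_le_div_of_nonneg_right ?_ hβ.le
    exact log_le_log (hpos i hi β) (single_le_sum (fun j hj => (hpos j hj β).le) hi)
  · have hterm : ∀ i ∈ s, f i β ≤ exp (β * m β) := fun i hi => by
      rw [← exp_log (hpos i hi β), exp_le_exp, ← div_le_iff₀' hβ]
      exact le_sup' (fun i => log (f i β) / β) hi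
    have hsum : ∑ i ∈ s, f i β ≤ #s * exp (β * m β) := by
      simpa using sum_le_card_nsmul s (f · β) _ hterm
    have hlog : log (∑ i ∈ s, f i β) ≤ log #s + β * m β := by
      have hcard_pos : (0 : ℝ) < #s := by exact_mod_cast hs.card_pos
      simpa [log_mul hcard_pos.ne' (exp_pos _).ne'] using log_le_log (hsum_pos β) hsum
    rw [div_add' _ _ _ hβ.ne', div_le_div_iff_of_pos_right hβ]
    linarith

theorem tendsto_log_mul_exp_div_atTop {c : ℝ} (hc : 0 < c) (b : ℝ) :
    Tendsto (fun β => log (c * exp (β * b)) / β) atTop (𝓝 b) := by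
  have h : Tendsto (fun β : ℝ => log c / β + b) atTop (𝓝 b) := by
    simpa using (tendsto_id.const_div_atTop (log c)).add_const b
  refine h.congr' ?_
  filter_upwards [eventually_ne_atTop 0] with β hβ
  rw [log_mul hc.ne' (exp_pos _).ne', log_exp]
  field_simp

section Kirchhoff

variable {K : Type*} [Fintype K] [DecidableEq K] (a : K → K → ℝ) (Γ : K → ℝ) (U : K → K → ℝ)

lemma prod_pos_of_mem_treesA {x : K} {t : K → K} (ht : t ∈ treesA a x) :
    0 < ∏ y ∈ univ.filter (· ≠ x), a y (t y) :=
  prod_pos fun y hy => (mem_filter.mp ht).2.2 y (mem_filter.mp hy).2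

lemma Wβ_eq_sum_mul_exp (β : ℝ) (x : K) :
    Wβ a Γ U β x = ∑ t ∈ treesA a x,
      (∏ y ∈ univ.filter (· ≠ x), a y (t y)) * exp (β * (Γ x - ∑ y, Γ y - UT U x t)) := by
  have hΓ : ∑ y ∈ univ.filter (· ≠ x), Γ y = ∑ y, Γ y - Γ x := by
    rw [filter_ne' univ x, sum_erase_eq_sub (mem_univ x)]
  refine sum_congr rfl fun t _ => ?_
  rw [prod_mul_distrib, ← exp_sum, ← mul_sum, sum_add_distrib, hΓ, UT]
  congr 2
  ring

lemma Wβ_pos (β : ℝ) {x : K} (hne : (treesA a x).Nonempty) : 0 < Wβ a Γ U β x := by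
  rw [Wβ_eq_sum_mul_exp]
  exact sum_pos (fun t ht => mul_pos (prod_pos_of_mem_treesA a ht) (exp_pos _)) hne

theorem tendsto_log_Wβ_div_atTop {x : K} (hne : (treesA a x).Nonempty) :
    Tendsto (fun β => log (Wβ a Γ U β x) / β) atTop
      (𝓝 (Γ x - ∑ y, Γ y - (treesA a x).inf' hne (UT U x))) := by
  have hrate : (treesA a x).sup' hne (fun t => Γ x - ∑ y, Γ y - UT U x t) =
      Γ x - ∑ y, Γ y - (treesA a x).inf' hne (UT U x) :=
    (map_finset_inf' (OrderIso.subLeft _) hne _).symm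
  simp only [Wβ_eq_sum_mul_exp, ← hrate]
  exact tendsto_log_sum_div_atTop hne
    (fun t ht β => mul_pos (prod_pos_of_mem_treesA a ht) (exp_pos _))
    (fun t ht => tendsto_log_mul_exp_div_atTop (prod_pos_of_mem_treesA a ht) _)

end Kirchhoff

theorem stmt18_general {K : Type*} [Fintype K] [DecidableEq K] [Nonempty K]
    (a : K → K → ℝ) (Γ : K → ℝ) (U : K → K → ℝ)
    (hne : ∀ x : K, (treesA a x).Nonempty)
    (hΘ0 : ∀ x : K, (treesA a x).inf' (hne x) (UT U x) = 0) :
    ∀ x : K,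
      Tendsto (fun β : ℝ => Real.log (ρ a Γ U β x) / β) atTop
        (nhds (Γ x - Finset.univ.sup' Finset.univ_nonempty Γ)) := by
  intro x
  have hnum := tendsto_log_Wβ_div_atTop a Γ U (hne x)
  have hden := tendsto_log_sum_div_atTop univ_nonempty
    (fun z _ β => Wβ_pos a Γ U β (hne z)) (fun z _ => tendsto_log_Wβ_div_atTop a Γ U (hne z))
  simp only [hΘ0, sub_zero, sub_eq_add_neg _ (∑ y, Γ y), ← sup'_add] at hnum hden
  rw [show Γ x - univ.sup' univ_nonempty Γ =
      Γ x + -∑ y, Γ y - (univ.sup' univ_nonempty Γ + -∑ y, Γ y) by ring]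
  refine (hnum.sub hden).congr fun β => ?_
  have hsum_pos := sum_pos (fun z _ => Wβ_pos a Γ U β (hne z)) univ_nonempty
  rw [ρ, log_div (Wβ_pos a Γ U β (hne x)).ne' hsum_pos.ne', sub_div]

/-- If `Θ ≡ 0` (strongly connected digraph of preferred transitions) then
`lim_β (1/β) log ρ(x) = Γ(x) − max_y Γ(y)`: the asymptotically dominant states are
exactly those with the longest log-asymptotic lifetime `Γ`. -/
theorem stmt18 {K : Type*} [Fintype K] [DecidableEq K] [Nonempty K]
    (a : K → K → ℝ) (Γ : K → ℝ) (U : K → K → ℝ)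
    (ha : ∀ y z, 0 ≤ a y z) (hU : ∀ y z, 0 ≤ U y z)
    (hne : ∀ x : K, (treesA a x).Nonempty)
    (hΘ0 : ∀ x : K, (treesA a x).inf' (hne x) (UT U x) = 0) :
    ∀ x : K,
      Tendsto (fun β : ℝ => Real.log (ρ a Γ U β x) / β) atTop
        (nhds (Γ x - Finset.univ.sup' Finset.univ_nonempty Γ)) :=
  stmt18_general a Γ U hne hΘ0
end
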